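/- Let Σ be a real d×d matrix with trace zero that is diagonalizable over ℝ (i.e. similar to a real diagonal matrix), and let β : [s,t] → ℝ be continuous. Then det(∫_s^t exp((β(u)−β(s))·Σ) du) ≥ (t−s)^d. -/

import Mathlib

/-!
Conjugating by the diagonalizing matrix `P` turns the integrand into the diagonal matrix with
entries `exp (λᵢ (β u - β s))`, so the determinant is `∏ᵢ ∫ₛᵗ exp (λᵢ g)` with `g = β - β s`
and `∑ᵢ λᵢ = tr M = 0`. By Jensen's inequality for `exp`, each factor is at least
`(t - s) exp (λᵢ ⨍ g)`, and these lower bounds multiply to `(t - s) ^ d` because the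
exponents sum to zero.
-/

open MeasureTheory

attribute [local instance] Matrix.linftyOpNormedAddCommGroup Matrix.linftyOpNormedRing
  Matrix.linftyOpNormedAlgebra

theorem Real.exp_intervalAverage_le {f : ℝ → ℝ} {a b : ℝ} (hab : a ≠ b)
    (hf : IntervalIntegrable f volume a b)
    (hexp : IntervalIntegrable (fun x => exp (f x)) volume a b) :
    exp (⨍ x in a..b, f x) ≤ ⨍ x in a..b, exp (f x) :=
  convexOn_exp.map_set_average_le continuous_exp.continuousOn isClosed_univ
    (by simp [Real.volume_uIoc, sub_eq_zero, hab.symm]) (by simp [Real.volume_uIoc])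
    (ae_of_all _ fun _ => trivial) hf.def' hexp.def'

open Real Finset in
theorem le_prod_intervalIntegral_exp_mul {ι : Type*} [Fintype ι] {c : ι → ℝ}
    (hc : ∑ i, c i = 0) {g : ℝ → ℝ} (hg : Continuous g) {a b : ℝ} (hab : a < b) :
    (b - a) ^ Fintype.card ι ≤ ∏ i, ∫ u in a..b, exp (c i * g u) := by
  have jensen (i : ι) :
      (b - a) * exp (c i * ⨍ u in a..b, g u) ≤ ∫ u in a..b, exp (c i * g u) := by
    have hcg : Continuous fun u => c i * g u := continuous_const.mul hg
    calc (b - a) * exp (c i * ⨍ u in a..b, g u)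
        = (b - a) * exp (⨍ u in a..b, c i * g u) := by
          rw [interval_average_eq, interval_average_eq, intervalIntegral.integral_const_mul,
            smul_eq_mul, smul_eq_mul, mul_left_comm]
      _ ≤ (b - a) * ⨍ u in a..b, exp (c i * g u) := by
          gcongr
          exact Real.exp_intervalAverage_le hab.ne (hcg.intervalIntegrable a b)
            ((continuous_exp.comp hcg).intervalIntegrable a b)
      _ = ∫ u in a..b, exp (c i * g u) := by
          rw [interval_average_eq, smul_eq_mul, mul_inv_cancel_left₀ (sub_ne_zero.2 hab.ne')]
  calc (b - a) ^ Fintype.card ι = ∏ i, (b - a) * exp (c i * ⨍ u in a..b, g u) := by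
        rw [prod_mul_distrib, ← exp_sum, ← sum_mul, hc, zero_mul, exp_zero, mul_one, prod_const,
          card_univ]
    _ ≤ ∏ i, ∫ u in a..b, exp (c i * g u) :=
        prod_le_prod (fun i _ => by positivity) fun i _ => jensen i

theorem intervalIntegral.integral_const_mul_mul_const {A : Type*} [NormedRing A]
    [NormedAlgebra ℝ A] [CompleteSpace A] {f : ℝ → A} {a b : ℝ} {μ : Measure ℝ}
    (hf : IntervalIntegrable f μ a b) (x y : A) :
    ∫ u in a..b, x * f u * y ∂μ = x * (∫ u in a..b, f u ∂μ) * y :=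
  (((ContinuousLinearMap.mul ℝ A).flip y).comp
    (ContinuousLinearMap.mul ℝ A x)).intervalIntegral_comp_comm hf

namespace Matrix

variable {n : Type*} [Fintype n] [DecidableEq n] {μ : Measure ℝ} [IsLocallyFiniteMeasure μ]

theorem intervalIntegral_apply {F : ℝ → Matrix n n ℝ} (hF : Continuous F) (a b : ℝ) (i j : n) :
    (∫ u in a..b, F u ∂μ) i j = ∫ u in a..b, F u i j ∂μ :=
  ((entryLinearMap ℝ ℝ i j).toContinuousLinearMap.intervalIntegral_comp_comm
    (hF.intervalIntegrable a b)).symm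

theorem intervalIntegral_diagonal {f : ℝ → n → ℝ} (hf : Continuous f) (a b : ℝ) :
    ∫ u in a..b, diagonal (f u) ∂μ = diagonal fun i => ∫ u in a..b, f u i ∂μ := by
  ext i j
  rw [intervalIntegral_apply hf.matrix_diagonal]
  rcases eq_or_ne i j with rfl | hij
  · simp
  · simp [hij]

theorem exp_smul_conj_diagonal {P : Matrix n n ℝ} (hP : IsUnit P) (D : n → ℝ) (c : ℝ) :
    NormedSpace.exp (c • (P * diagonal D * P⁻¹)) =
      P * diagonal (fun i => Real.exp (c * D i)) * P⁻¹ := by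
  rw [← smul_mul_assoc, ← mul_smul_comm, ← diagonal_smul, exp_conj _ _ hP, exp_diagonal]
  congr
  funext i
  simp [Real.exp_eq_exp_ℝ]

end Matrix

theorem det_integral_matrixExp_ge_general (d : ℕ)
    (M : Matrix (Fin d) (Fin d) ℝ) (htr : Matrix.trace M = 0)
    (hdiag : ∃ (P : Matrix (Fin d) (Fin d) ℝ) (_ : IsUnit P.det) (D : Fin d → ℝ),
        M = P * Matrix.diagonal D * P⁻¹)
    (s t : ℝ) (hst : s < t) (β : ℝ → ℝ) (hβ : Continuous β) :
    (t - s) ^ d ≤ (∫ u in s..t, NormedSpace.exp ((β u - β s) • M)).det := by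
  obtain ⟨P, hPdet, D, rfl⟩ := hdiag
  have hP : IsUnit P := (Matrix.isUnit_iff_isUnit_det P).2 hPdet
  have hD : ∑ i, D i = 0 := by
    rwa [Matrix.trace_conj hP, Matrix.trace_diagonal] at htr
  have hg : Continuous fun u => β u - β s := hβ.sub continuous_const
  have hentries : Continuous fun u i => Real.exp ((β u - β s) * D i) := by fun_prop
  simp_rw [Matrix.exp_smul_conj_diagonal hP,
    intervalIntegral.integral_const_mul_mul_const (hentries.matrix_diagonal.intervalIntegrable s t),
    Matrix.det_conj hP, Matrix.intervalIntegral_diagonal hentries, Matrix.det_diagonal]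
  simpa only [mul_comm _ (D _), Fintype.card_fin] using le_prod_intervalIntegral_exp_mul hD hg hst

/-- For a trace-free real d×d matrix `M` that is diagonalizable over ℝ and a continuous
function β, the determinant of `∫_s^t exp((β(u)−β(s))·M) du` is at least `(t−s)^d`. -/
theorem det_integral_matrixExp_ge (d : ℕ) (hd : 1 ≤ d)
    (M : Matrix (Fin d) (Fin d) ℝ) (htr : Matrix.trace M = 0)
    (hdiag : ∃ (P : Matrix (Fin d) (Fin d) ℝ) (_ : IsUnit P.det) (D : Fin d → ℝ),
        M = P * Matrix.diagonal D * P⁻¹)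
    (s t : ℝ) (hst : s < t) (β : ℝ → ℝ) (hβ : Continuous β) :
    (t - s) ^ d ≤ (∫ u in s..t, NormedSpace.exp ((β u - β s) • M)).det :=
  det_integral_matrixExp_ge_general d M htr hdiag s t hst β hβ
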